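/- Let T ∈ ℕ with T ≥ 1, N ∈ ℕ, β > −1, and set S = ⌈T(N+1)/2⌉. Let x_0, …, x_S be points in (0,1) and w_0, …, w_S be strictly positive weights such that the quadrature rule Q[g] = Σ_{k=0}^{S} g(x_k) w_k satisfies Q[g] = ∫_0^1 g(x) x^β dx for every function g of the form g(x) = x^p (log x)^j with integers 0 ≤ p ≤ N and 0 ≤ j ≤ T−1. Then for all functions u_0, u_1, …, u_{T−1} ∈ C^{N+1}([0,1]) and f(x) = Σ_{j=0}^{T−1} u_j(x) (log x)^j, the quadrature error satisfies |∫_0^1 f(x) x^β dx − Σ_{k=0}^{S} f(x_k) w_k| ≤ (1/N!) · Σ_{j=0}^{T−1} ( j! / (1+β)^{j+1} ) · ‖u_j^{(N+1)}‖_∞, where ‖·‖_∞ denotes the supremum norm on [0,1] and u_j^{(N+1)} is the (N+1)-st derivative. -/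

import Mathlib

open MeasureTheory Set
open MeasureTheory Set

lemma exp_neg_image : (fun s : ℝ => Real.exp (-s)) '' (Set.Ioi 0) = Set.Ioo (0:ℝ) 1 := by
  ext t
  constructor
  · rintro ⟨s, hs, rfl⟩
    exact ⟨Real.exp_pos _, Real.exp_lt_one_iff.mpr (by simpa using hs)⟩
  · rintro ⟨ht0, ht1⟩
    exact ⟨-Real.log t, by simpa using Real.log_neg ht0 ht1, by simp [Real.exp_log ht0]⟩

lemma exp_neg_hasDeriv (s : ℝ) :
    HasDerivAt (fun s : ℝ => Real.exp (-s)) (-Real.exp (-s)) s := by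
  simpa [Function.comp_def] using (Real.hasDerivAt_exp (-s)).comp s (hasDerivAt_neg s)

lemma exp_neg_injOn : Set.InjOn (fun s : ℝ => Real.exp (-s)) (Set.Ioi 0) := by
  intro a _ b _ h
  simpa using Real.exp_injective h

lemma exp_side (β : ℝ) (j : ℕ) : ∀ s ∈ Set.Ioi (0:ℝ),
    |(-Real.exp (-s))| • ((-Real.log (Real.exp (-s))) ^ j * (Real.exp (-s)) ^ β)
      = s ^ j * Real.exp (-((1 + β) * s)) := by
  intro s hs
  have h1 : |(-Real.exp (-s))| = Real.exp (-s) := by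
    rw [abs_neg, abs_of_pos (Real.exp_pos _)]
  have h2 : (Real.exp (-s)) ^ β = Real.exp (-s * β) :=
    by rw [Real.rpow_def_of_pos (Real.exp_pos _), Real.log_exp]
  rw [smul_eq_mul, h1, Real.log_exp, neg_neg, h2,
    show -((1 + β) * s) = -s * β + -s by ring, Real.exp_add]
  ring

lemma integral_neg_log_pow_rpow {β : ℝ} (hβ : -1 < β) (j : ℕ) :
    ∫ t in Set.Ioo (0:ℝ) 1, (-Real.log t) ^ j * t ^ β
      = (j.factorial : ℝ) / (1 + β) ^ (j + 1) := by
  have hb : (0:ℝ) < 1 + β := by linarith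
  rw [← exp_neg_image, integral_image_eq_integral_abs_deriv_smul measurableSet_Ioi
    (fun s _ => (exp_neg_hasDeriv s).hasDerivWithinAt) exp_neg_injOn,
    setIntegral_congr_fun measurableSet_Ioi (exp_side β j),
    setIntegral_congr_fun measurableSet_Ioi
      (show ∀ s ∈ Set.Ioi (0:ℝ), s ^ j * Real.exp (-((1+β)*s))
          = s ^ ((j:ℝ) + 1 - 1) * Real.exp (-((1+β)*s)) from
        fun s _ => by rw [add_sub_cancel_right, Real.rpow_natCast]),
    Real.integral_rpow_mul_exp_neg_mul_Ioi (by positivity) hb]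
  rw [show ((j:ℝ) + 1) = ((j+1 : ℕ) : ℝ) by push_cast; ring, Real.rpow_natCast,
    show ((j+1 : ℕ) : ℝ) = (j:ℝ) + 1 by push_cast; ring,
    Real.Gamma_nat_eq_factorial, div_pow, one_pow]
  ring

lemma integrableOn_neg_log_pow_rpow {β : ℝ} (hβ : -1 < β) (j : ℕ) :
    IntegrableOn (fun t => (-Real.log t) ^ j * t ^ β) (Set.Ioo (0:ℝ) 1) := by
  have hb : (0:ℝ) < 1 + β := by linarith
  have base : IntegrableOn (fun s : ℝ => s ^ j * Real.exp (-((1+β) * s))) (Set.Ioi 0) := by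
    have base0 := integrableOn_rpow_mul_exp_neg_mul_rpow (p := 1) (s := (j:ℝ))
      (by linarith [Nat.cast_nonneg (α := ℝ) j]) one_pos hb
    have : ∀ s : ℝ, Real.exp ((-β + -1) * s) = Real.exp (-((1+β)*s)) := fun s => by ring_nf
    simpa [Real.rpow_one, Real.rpow_natCast, neg_mul, this] using base0
  rw [← exp_neg_image]
  rw [integrableOn_image_iff_integrableOn_abs_deriv_smul measurableSet_Ioi
    (fun s _ => (exp_neg_hasDeriv s).hasDerivWithinAt) exp_neg_injOn]
  exact base.congr_fun (fun s hs => (exp_side β j s hs).symm) measurableSet_Ioi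

lemma taylor_mid_bound {f : ℝ → ℝ} {C : ℝ} {n : ℕ}
    (hf : ContDiffOn ℝ (n+1) f (Set.Icc 0 1))
    (hC : ∀ y ∈ Set.Icc (0:ℝ) 1, |iteratedDerivWithin (n+1) f (Set.Icc 0 1) y| ≤ C)
    {x : ℝ} (hx : x ∈ Set.Icc (0:ℝ) 1) :
    |f x - taylorWithinEval f n (Set.Icc 0 1) 2⁻¹ x| ≤ C / (2 * n.factorial) := by
  have h01 : (0:ℝ) < 1 := one_pos
  have hC0 : 0 ≤ C := le_trans (abs_nonneg _) (hC 0 ⟨le_refl _, zero_le_one⟩)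
  have hf' : DifferentiableOn ℝ (iteratedDerivWithin n f (Set.Icc 0 1)) (Set.Icc 0 1) :=
    hf.differentiableOn_iteratedDerivWithin (by exact_mod_cast n.lt_succ_self)
      (uniqueDiffOn_Icc h01)
  set D : ℝ → ℝ := fun t =>
    (((n.factorial :ℝ))⁻¹ * (x - t) ^ n) • iteratedDerivWithin (n+1) f (Set.Icc 0 1) t with hD
  have hg : ∀ t ∈ Set.Icc (0:ℝ) 1,
      HasDerivWithinAt (fun y => taylorWithinEval f n (Set.Icc 0 1) y x) (D t)
        (Set.Icc 0 1) t := fun t ht =>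
    hasDerivWithinAt_taylorWithinEval_at_Icc x h01 ht hf.of_succ hf'
  set C' : ℝ := C * (2⁻¹) ^ n / n.factorial with hC'
  have hC'0 : 0 ≤ C' := by positivity
  have hDb : ∀ t ∈ Set.Icc (0:ℝ) 1, |x - t| ≤ 2⁻¹ → ‖D t‖ ≤ C' := by
    intro t ht hxt
    rw [hD]
    simp only [smul_eq_mul, Real.norm_eq_abs, abs_mul, abs_inv, abs_pow, Nat.abs_cast]
    have h1 : |x - t| ^ n ≤ (2⁻¹:ℝ) ^ n := pow_le_pow_left₀ (abs_nonneg _) hxt n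
    calc (↑n.factorial:ℝ)⁻¹ * |x - t| ^ n * |iteratedDerivWithin (n+1) f (Set.Icc 0 1) t|
        ≤ (↑n.factorial:ℝ)⁻¹ * (2⁻¹:ℝ) ^ n * C := by
          apply mul_le_mul (mul_le_mul_of_nonneg_left h1 (by positivity)) (hC t ht)
            (abs_nonneg _) (by positivity)
      _ = C' := by rw [hC']; ring
  have key : |f x - taylorWithinEval f n (Set.Icc 0 1) 2⁻¹ x| ≤ C' * 2⁻¹ := by
    rcases le_total x 2⁻¹ with hx2 | hx2
    · have hsub : Set.Icc x 2⁻¹ ⊆ Set.Icc (0:ℝ) 1 := Icc_subset_Icc hx.1 (by norm_num)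
      have := norm_image_sub_le_of_norm_deriv_le_segment'
        (f := fun y => taylorWithinEval f n (Set.Icc 0 1) y x) (f' := D) (C := C')
        (fun t ht => (hg t (hsub ht)).mono hsub)
        (fun t ht => hDb t (hsub (Ico_subset_Icc_self ht))
          (by rw [abs_sub_comm, abs_of_nonneg (by linarith [ht.1] : (0:ℝ) ≤ t - x)]
              have := ht.2.le; have := hx.1; linarith))
        2⁻¹ (right_mem_Icc.mpr hx2)
      simp only [taylorWithinEval_self, Real.norm_eq_abs] at this
      rw [abs_sub_comm]
      calc |taylorWithinEval f n (Set.Icc 0 1) 2⁻¹ x - f x| ≤ C' * (2⁻¹ - x) := this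
        _ ≤ C' * 2⁻¹ := by have := hx.1; nlinarith
    · have hsub : Set.Icc (2⁻¹:ℝ) x ⊆ Set.Icc (0:ℝ) 1 := Icc_subset_Icc (by norm_num) hx.2
      have := norm_image_sub_le_of_norm_deriv_le_segment'
        (f := fun y => taylorWithinEval f n (Set.Icc 0 1) y x) (f' := D) (C := C')
        (fun t ht => (hg t (hsub ht)).mono hsub)
        (fun t ht => hDb t (hsub (Ico_subset_Icc_self ht))
          (by rw [abs_of_nonneg (by linarith [ht.2.le] : (0:ℝ) ≤ x - t)]
              have := ht.1; have := hx.2; linarith))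
        x (right_mem_Icc.mpr hx2)
      simp only [taylorWithinEval_self, Real.norm_eq_abs] at this
      calc |f x - taylorWithinEval f n (Set.Icc 0 1) 2⁻¹ x| ≤ C' * (x - 2⁻¹) := this
        _ ≤ C' * 2⁻¹ := by have := hx.2; nlinarith
  refine key.trans ?_
  rw [hC']
  have h1 : ((2:ℝ)⁻¹) ^ n ≤ 1 := pow_le_one₀ (by norm_num) (by norm_num)
  have hnf : (0:ℝ) < n.factorial := by positivity
  rw [div_mul_eq_mul_div, div_le_div_iff₀ (by positivity) (by positivity)]
  calc C * 2⁻¹ ^ n * 2⁻¹ * (2 * n.factorial) = C * n.factorial * (2⁻¹)^n := by ring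
    _ ≤ C * n.factorial * 1 := by gcongr
    _ = C * n.factorial := by ring

lemma intOn_mul_log_rpow {β : ℝ} (hβ : -1 < β) (j : ℕ) {g : ℝ → ℝ} {K : ℝ}
    (hg : ContinuousOn g (Set.Ioo 0 1))
    (hK : ∀ t ∈ Set.Ioo (0:ℝ) 1, |g t| ≤ K) :
    IntegrableOn (fun t => g t * Real.log t ^ j * t ^ β) (Set.Ioo (0:ℝ) 1) := by
  have hmeas : ContinuousOn (fun t => g t * Real.log t ^ j * t ^ β) (Set.Ioo 0 1) := by
    refine ContinuousOn.mul (ContinuousOn.mul hg ?_) ?_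
    · exact (Real.continuousOn_log.mono (fun t ht => ht.1.ne')).pow j
    · intro t ht
      exact (Real.continuousAt_rpow_const t β (Or.inl ht.1.ne')).continuousWithinAt
  apply Integrable.mono' ((integrableOn_neg_log_pow_rpow hβ j).const_mul K)
    (hmeas.aestronglyMeasurable measurableSet_Ioo)
  filter_upwards [ae_restrict_mem measurableSet_Ioo] with t ht
  have hlog : Real.log t ≤ 0 := (Real.log_neg ht.1 ht.2).le
  have h1 : |Real.log t ^ j| = (-Real.log t) ^ j := by
    rw [abs_pow, abs_of_nonpos hlog]
  have h2 : |t ^ β| = t ^ β := abs_of_pos (Real.rpow_pos_of_pos ht.1 β)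
  rw [Real.norm_eq_abs, abs_mul, abs_mul, h1, h2, ← mul_assoc]
  have hlp : (0:ℝ) ≤ (-Real.log t) ^ j := pow_nonneg (by linarith) j
  have hrp : (0:ℝ) ≤ t ^ β := (Real.rpow_pos_of_pos ht.1 β).le
  exact mul_le_mul_of_nonneg_right
    (mul_le_mul_of_nonneg_right (hK t ht) hlp) hrp

lemma quad_exact_poly {β : ℝ} (hβ : -1 < β) {n : ℕ} {m : ℕ} (x w : Fin m → ℝ)
    (j : ℕ)
    (hexact : ∀ p ≤ n, ∑ k, x k ^ p * Real.log (x k) ^ j * w k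
        = ∫ t in Set.Ioo (0:ℝ) 1, t ^ p * Real.log t ^ j * t ^ β)
    (P : Polynomial ℝ) (hP : P.natDegree ≤ n) :
    ∑ k, P.eval (x k) * Real.log (x k) ^ j * w k
      = ∫ t in Set.Ioo (0:ℝ) 1, P.eval t * Real.log t ^ j * t ^ β := by
  have hev : ∀ t : ℝ, P.eval t = ∑ i ∈ Finset.range (n+1), P.coeff i * t ^ i :=
    fun t => Polynomial.eval_eq_sum_range' (Nat.lt_succ_of_le hP) t
  have hmono : ∀ i : ℕ, IntegrableOn
      (fun t : ℝ => t ^ i * Real.log t ^ j * t ^ β) (Set.Ioo (0:ℝ) 1) := by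
    intro i
    refine intOn_mul_log_rpow hβ j (K := 1) (continuousOn_pow i) (fun t ht => ?_)
    rw [abs_pow]
    exact pow_le_one₀ (abs_nonneg _) (abs_le.mpr ⟨by linarith [ht.1], ht.2.le⟩)
  have hint : ∀ i ∈ Finset.range (n+1), IntegrableOn
      (fun t : ℝ => P.coeff i * (t ^ i * Real.log t ^ j * t ^ β)) (Set.Ioo (0:ℝ) 1) :=
    fun i _ => (hmono i).const_mul _
  calc ∑ k, P.eval (x k) * Real.log (x k) ^ j * w k
      = ∑ k, ∑ i ∈ Finset.range (n+1),
          P.coeff i * (x k ^ i * Real.log (x k) ^ j * w k) := by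
        refine Finset.sum_congr rfl fun k _ => ?_
        rw [hev (x k), Finset.sum_mul, Finset.sum_mul]
        exact Finset.sum_congr rfl fun i _ => by ring
    _ = ∑ i ∈ Finset.range (n+1), P.coeff i * ∑ k, x k ^ i * Real.log (x k) ^ j * w k := by
        rw [Finset.sum_comm]
        exact Finset.sum_congr rfl fun i _ => (Finset.mul_sum _ _ _).symm
    _ = ∑ i ∈ Finset.range (n+1), P.coeff i *
          ∫ t in Set.Ioo (0:ℝ) 1, t ^ i * Real.log t ^ j * t ^ β := by
        refine Finset.sum_congr rfl fun i hi => ?_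
        rw [hexact i (Nat.lt_succ_iff.mp (Finset.mem_range.mp hi))]
    _ = ∑ i ∈ Finset.range (n+1),
          ∫ t in Set.Ioo (0:ℝ) 1, P.coeff i * (t ^ i * Real.log t ^ j * t ^ β) := by
        refine Finset.sum_congr rfl fun i _ => ?_
        rw [integral_const_mul]
    _ = ∫ t in Set.Ioo (0:ℝ) 1, ∑ i ∈ Finset.range (n+1),
          P.coeff i * (t ^ i * Real.log t ^ j * t ^ β) :=
        (integral_finset_sum _ hint).symm
    _ = ∫ t in Set.Ioo (0:ℝ) 1, P.eval t * Real.log t ^ j * t ^ β := by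
        refine setIntegral_congr_fun measurableSet_Ioo (fun t _ => ?_)
        rw [hev t, Finset.sum_mul, Finset.sum_mul]
        exact Finset.sum_congr rfl fun i _ => by ring

lemma pointwise_bound_aux {β : ℝ} (j : ℕ) {g : ℝ → ℝ} {K : ℝ}
    (hK : ∀ t ∈ Set.Ioo (0:ℝ) 1, |g t| ≤ K) :
    ∀ t ∈ Set.Ioo (0:ℝ) 1, |g t * Real.log t ^ j * t ^ β|
      ≤ K * ((-Real.log t) ^ j * t ^ β) := by
  intro t ht
  have hlog : Real.log t ≤ 0 := (Real.log_neg ht.1 ht.2).le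
  have h1 : |Real.log t ^ j| = (-Real.log t) ^ j := by rw [abs_pow, abs_of_nonpos hlog]
  have h2 : |t ^ β| = t ^ β := abs_of_pos (Real.rpow_pos_of_pos ht.1 β)
  rw [abs_mul, abs_mul, h1, h2, ← mul_assoc]
  exact mul_le_mul_of_nonneg_right
    (mul_le_mul_of_nonneg_right (hK t ht) (pow_nonneg (by linarith) j))
    (Real.rpow_pos_of_pos ht.1 β).le

theorem gauss_quadrature_log_power_error_bound
    (T : ℕ) (hT : 1 ≤ T) (N : ℕ) (β : ℝ) (hβ : β > -1)
    (S : ℕ) (hS : S = (T * (N + 1) + 1) / 2)  -- S = ⌈T(N+1)/2⌉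
    (x w : Fin (S + 1) → ℝ)
    (hx : ∀ k, x k ∈ Set.Ioo (0:ℝ) 1) (hw : ∀ k, 0 < w k)
    (hexact : ∀ p : ℕ, p ≤ N → ∀ j : ℕ, j ≤ T - 1 →
      ∑ k, x k ^ p * Real.log (x k) ^ j * w k
        = ∫ t in Set.Ioo (0:ℝ) 1, t ^ p * Real.log t ^ j * t ^ β)
    (u : ℕ → ℝ → ℝ)
    (hu : ∀ j ≤ T - 1, ContDiffOn ℝ (N + 1) (u j) (Set.Icc 0 1)) :
    |(∫ t in Set.Ioo (0:ℝ) 1,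
          (∑ j ∈ Finset.range T, u j t * Real.log t ^ j) * t ^ β)
        - ∑ k, (∑ j ∈ Finset.range T, u j (x k) * Real.log (x k) ^ j) * w k|
      ≤ (1 / (N.factorial : ℝ)) *
        ∑ j ∈ Finset.range T,
          ((j.factorial : ℝ) / (1 + β) ^ (j + 1)) *
            (⨆ t : Set.Icc (0:ℝ) 1,
              |iteratedDerivWithin (N + 1) (u j) (Set.Icc (0:ℝ) 1) t|) := by
  have hβ' : (-1:ℝ) < β := hβ
  -- the Taylor polynomials
  set P : ℕ → Polynomial ℝ := fun j => ∑ i ∈ Finset.range (N+1),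
      Polynomial.C ((i.factorial : ℝ)⁻¹ * iteratedDerivWithin i (u j) (Set.Icc 0 1) 2⁻¹) *
        (Polynomial.X - Polynomial.C 2⁻¹) ^ i with hPdef
  have hPdeg : ∀ j, (P j).natDegree ≤ N := by
    intro j
    refine Polynomial.natDegree_sum_le_of_forall_le _ _ fun i hi => ?_
    refine le_trans (Polynomial.natDegree_C_mul_le _ _) ?_
    refine le_trans (Polynomial.natDegree_pow_le) ?_
    rw [Polynomial.natDegree_X_sub_C, mul_one]
    exact Nat.lt_succ_iff.mp (Finset.mem_range.mp hi)
  have hPeval : ∀ j t, (P j).eval t = taylorWithinEval (u j) N (Set.Icc 0 1) 2⁻¹ t := by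
    intro j t
    rw [taylor_within_apply, hPdef]
    rw [Polynomial.eval_finset_sum]
    refine Finset.sum_congr rfl fun i _ => ?_
    simp only [Polynomial.eval_mul, Polynomial.eval_pow, Polynomial.eval_sub,
      Polynomial.eval_X, Polynomial.eval_C, smul_eq_mul]
    ring
  -- the sup constants
  set Cs : ℕ → ℝ := fun j => ⨆ t : Set.Icc (0:ℝ) 1,
      |iteratedDerivWithin (N + 1) (u j) (Set.Icc (0:ℝ) 1) t| with hCs
  have hCb : ∀ j ≤ T - 1, ∀ y ∈ Set.Icc (0:ℝ) 1,
      |iteratedDerivWithin (N + 1) (u j) (Set.Icc (0:ℝ) 1) y| ≤ Cs j := by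
    intro j hj y hy
    have hcont : ContinuousOn (iteratedDerivWithin (N+1) (u j) (Set.Icc 0 1)) (Set.Icc 0 1) :=
      (hu j hj).continuousOn_iteratedDerivWithin (by exact_mod_cast le_rfl)
        (uniqueDiffOn_Icc one_pos)
    have hbdd : BddAbove (Set.range fun t : Set.Icc (0:ℝ) 1 =>
        |iteratedDerivWithin (N + 1) (u j) (Set.Icc (0:ℝ) 1) t|) :=
      BddAbove.mono
        (Set.range_subset_iff.mpr fun t => Set.mem_image_of_mem
          (fun y => |iteratedDerivWithin (N + 1) (u j) (Set.Icc (0:ℝ) 1) y|) t.2)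
        (isCompact_Icc.image_of_continuousOn hcont.abs).bddAbove
    exact le_ciSup hbdd (⟨y, hy⟩ : Set.Icc (0:ℝ) 1)
  -- Taylor error bound
  have herr : ∀ j ≤ T - 1, ∀ t ∈ Set.Icc (0:ℝ) 1,
      |u j t - (P j).eval t| ≤ Cs j / (2 * N.factorial) := by
    intro j hj t ht
    rw [hPeval j t]
    exact taylor_mid_bound (hu j hj) (hCb j hj) ht
  -- integrability facts
  have hintu : ∀ j ≤ T - 1, IntegrableOn
      (fun t => u j t * Real.log t ^ j * t ^ β) (Set.Ioo (0:ℝ) 1) := by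
    intro j hj
    obtain ⟨K, hK⟩ := isCompact_Icc.exists_bound_of_continuousOn (hu j hj).continuousOn
    exact intOn_mul_log_rpow hβ' j
      (((hu j hj).continuousOn).mono Set.Ioo_subset_Icc_self)
      (fun t ht => hK t (Set.Ioo_subset_Icc_self ht))
  have hintP : ∀ j : ℕ, IntegrableOn
      (fun t => (P j).eval t * Real.log t ^ j * t ^ β) (Set.Ioo (0:ℝ) 1) := by
    intro j
    obtain ⟨K, hK⟩ := isCompact_Icc.exists_bound_of_continuousOn
      ((P j).continuous_aeval.continuousOn (s := Set.Icc (0:ℝ) 1))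
    exact intOn_mul_log_rpow hβ' j
      ((P j).continuous_aeval.continuousOn)
      (fun t ht => hK t (Set.Ioo_subset_Icc_self ht))
  have hjmem : ∀ j ∈ Finset.range T, j ≤ T - 1 :=
    fun j hj => Nat.le_pred_of_lt (Finset.mem_range.mp hj)
  -- split integral and sum
  have hI1 : (∫ t in Set.Ioo (0:ℝ) 1,
        (∑ j ∈ Finset.range T, u j t * Real.log t ^ j) * t ^ β)
      = ∑ j ∈ Finset.range T, ∫ t in Set.Ioo (0:ℝ) 1,
          u j t * Real.log t ^ j * t ^ β := by
    calc (∫ t in Set.Ioo (0:ℝ) 1,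
            (∑ j ∈ Finset.range T, u j t * Real.log t ^ j) * t ^ β)
        = ∫ t in Set.Ioo (0:ℝ) 1,
            ∑ j ∈ Finset.range T, u j t * Real.log t ^ j * t ^ β := by
          refine setIntegral_congr_fun measurableSet_Ioo (fun t _ => ?_)
          rw [Finset.sum_mul]
      _ = ∑ j ∈ Finset.range T, ∫ t in Set.Ioo (0:ℝ) 1,
            u j t * Real.log t ^ j * t ^ β :=
          integral_finset_sum _ (fun j hj => hintu j (hjmem j hj))
  have hQ1 : ∑ k, (∑ j ∈ Finset.range T, u j (x k) * Real.log (x k) ^ j) * w k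
      = ∑ j ∈ Finset.range T, ∑ k, u j (x k) * Real.log (x k) ^ j * w k := by
    rw [Finset.sum_comm]
    exact Finset.sum_congr rfl fun k _ => Finset.sum_mul _ _ _
  -- per-j error decomposition
  have hper : ∀ j ∈ Finset.range T,
      (∫ t in Set.Ioo (0:ℝ) 1, u j t * Real.log t ^ j * t ^ β)
        - ∑ k, u j (x k) * Real.log (x k) ^ j * w k
      = (∫ t in Set.Ioo (0:ℝ) 1,
            (u j t - (P j).eval t) * Real.log t ^ j * t ^ β)
        - ∑ k, (u j (x k) - (P j).eval (x k)) * Real.log (x k) ^ j * w k := by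
    intro j hj
    have hj' := hjmem j hj
    have hexactP := quad_exact_poly hβ' x w j (fun p hp => hexact p hp j hj') (P j) (hPdeg j)
    have hsplit : (∫ t in Set.Ioo (0:ℝ) 1,
          (u j t - (P j).eval t) * Real.log t ^ j * t ^ β)
        = (∫ t in Set.Ioo (0:ℝ) 1, u j t * Real.log t ^ j * t ^ β)
          - ∫ t in Set.Ioo (0:ℝ) 1, (P j).eval t * Real.log t ^ j * t ^ β := by
      rw [← integral_sub (hintu j hj') (hintP j)]
      refine setIntegral_congr_fun measurableSet_Ioo (fun t _ => ?_)
      ring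
    have hsum : ∑ k, (u j (x k) - (P j).eval (x k)) * Real.log (x k) ^ j * w k
        = (∑ k, u j (x k) * Real.log (x k) ^ j * w k)
          - ∑ k, (P j).eval (x k) * Real.log (x k) ^ j * w k := by
      rw [← Finset.sum_sub_distrib]
      exact Finset.sum_congr rfl fun k _ => by ring
    rw [hsplit, hsum, hexactP]
    ring
  rw [hI1, hQ1, ← Finset.sum_sub_distrib, Finset.sum_congr rfl hper]
  -- final estimate
  calc |∑ j ∈ Finset.range T,
        ((∫ t in Set.Ioo (0:ℝ) 1, (u j t - (P j).eval t) * Real.log t ^ j * t ^ β)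
          - ∑ k, (u j (x k) - (P j).eval (x k)) * Real.log (x k) ^ j * w k)|
      ≤ ∑ j ∈ Finset.range T,
        |(∫ t in Set.Ioo (0:ℝ) 1, (u j t - (P j).eval t) * Real.log t ^ j * t ^ β)
          - ∑ k, (u j (x k) - (P j).eval (x k)) * Real.log (x k) ^ j * w k| :=
        Finset.abs_sum_le_sum_abs _ _
    _ ≤ ∑ j ∈ Finset.range T, (1 / (N.factorial : ℝ)) *
          (((j.factorial : ℝ) / (1 + β) ^ (j + 1)) * Cs j) := by
        refine Finset.sum_le_sum fun j hj => ?_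
        have hj' := hjmem j hj
        set E : ℝ := Cs j / (2 * N.factorial) with hE
        have herr' : ∀ t ∈ Set.Ioo (0:ℝ) 1, |u j t - (P j).eval t| ≤ E :=
          fun t ht => herr j hj' t (Set.Ioo_subset_Icc_self ht)
        have hIval : ∫ t in Set.Ioo (0:ℝ) 1, (-Real.log t) ^ j * t ^ β
            = (j.factorial : ℝ) / (1 + β) ^ (j + 1) := integral_neg_log_pow_rpow hβ' j
        -- integral part
        have hA : |∫ t in Set.Ioo (0:ℝ) 1,
              (u j t - (P j).eval t) * Real.log t ^ j * t ^ β|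
            ≤ E * ((j.factorial : ℝ) / (1 + β) ^ (j + 1)) := by
          have hb := norm_integral_le_of_norm_le
            (f := fun t : ℝ => (u j t - (P j).eval t) * Real.log t ^ j * t ^ β)
            (((integrableOn_neg_log_pow_rpow hβ' j).const_mul E))
            (by filter_upwards [ae_restrict_mem measurableSet_Ioo] with t ht
                exact pointwise_bound_aux j herr' t ht)
          rw [Real.norm_eq_abs] at hb
          refine hb.trans_eq ?_
          rw [integral_const_mul, hIval]
        -- quadrature part
        have hquadj : ∑ k, (-Real.log (x k)) ^ j * w k
            = (j.factorial : ℝ) / (1 + β) ^ (j + 1) := by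
          have h0 := hexact 0 (Nat.zero_le N) j hj'
          simp only [pow_zero, one_mul] at h0
          calc ∑ k, (-Real.log (x k)) ^ j * w k
              = (-1:ℝ) ^ j * ∑ k, Real.log (x k) ^ j * w k := by
                rw [Finset.mul_sum]
                exact Finset.sum_congr rfl fun k _ => by rw [neg_pow]; ring
            _ = (-1:ℝ) ^ j * ∫ t in Set.Ioo (0:ℝ) 1, Real.log t ^ j * t ^ β := by rw [h0]
            _ = ∫ t in Set.Ioo (0:ℝ) 1, (-Real.log t) ^ j * t ^ β := by
                rw [← integral_const_mul]
                refine setIntegral_congr_fun measurableSet_Ioo (fun t _ => ?_)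
                rw [neg_pow]; ring
            _ = (j.factorial : ℝ) / (1 + β) ^ (j + 1) := hIval
        have hB : |∑ k, (u j (x k) - (P j).eval (x k)) * Real.log (x k) ^ j * w k|
            ≤ E * ((j.factorial : ℝ) / (1 + β) ^ (j + 1)) := by
          calc |∑ k, (u j (x k) - (P j).eval (x k)) * Real.log (x k) ^ j * w k|
              ≤ ∑ k, |(u j (x k) - (P j).eval (x k)) * Real.log (x k) ^ j * w k| :=
                Finset.abs_sum_le_sum_abs _ _
            _ ≤ ∑ k, E * ((-Real.log (x k)) ^ j * w k) := by
                refine Finset.sum_le_sum fun k _ => ?_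
                have hxk := hx k
                have hlog : Real.log (x k) ≤ 0 := (Real.log_neg hxk.1 hxk.2).le
                have h1 : |Real.log (x k) ^ j| = (-Real.log (x k)) ^ j := by
                  rw [abs_pow, abs_of_nonpos hlog]
                have h2 : |w k| = w k := abs_of_pos (hw k)
                rw [abs_mul, abs_mul, h1, h2, ← mul_assoc]
                exact mul_le_mul_of_nonneg_right
                  (mul_le_mul_of_nonneg_right (herr' (x k) hxk)
                    (pow_nonneg (by linarith) j)) (hw k).le
            _ = E * ((j.factorial : ℝ) / (1 + β) ^ (j + 1)) := by
                rw [← Finset.mul_sum, hquadj]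
        calc |(∫ t in Set.Ioo (0:ℝ) 1,
                (u j t - (P j).eval t) * Real.log t ^ j * t ^ β)
              - ∑ k, (u j (x k) - (P j).eval (x k)) * Real.log (x k) ^ j * w k|
            ≤ |∫ t in Set.Ioo (0:ℝ) 1,
                (u j t - (P j).eval t) * Real.log t ^ j * t ^ β|
              + |∑ k, (u j (x k) - (P j).eval (x k)) * Real.log (x k) ^ j * w k| :=
              abs_sub _ _
          _ ≤ E * ((j.factorial : ℝ) / (1 + β) ^ (j + 1))
              + E * ((j.factorial : ℝ) / (1 + β) ^ (j + 1)) := add_le_add hA hB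
          _ = (1 / (N.factorial : ℝ)) *
              (((j.factorial : ℝ) / (1 + β) ^ (j + 1)) * Cs j) := by
              rw [hE, div_eq_mul_inv, mul_inv]
              ring
    _ = (1 / (N.factorial : ℝ)) * ∑ j ∈ Finset.range T,
          ((j.factorial : ℝ) / (1 + β) ^ (j + 1)) * Cs j := by
        rw [Finset.mul_sum]
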